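/- Let F be a field whose characteristic does not divide k (k ≥ 1), let A be an m×n matrix over F and let α ∈ F. Then R^Σ_{m×n}((α/k) · ⊗^k A) = R^{(1)}_{m×n}(α · ⊗^k A). (Consequently, R^Σ_{m×n} restricted to the set X = { α · ⊗^k A : A an m×n matrix, α ∈ F } is a bijection from X onto R^{(1)}_{m×n}(X).) -/
import Mathlib


open Matrix Kronecker

/-- `vec A` is the vector of entries of the matrix `A`, indexed by pairs. -/
def vec {F : Type*} [Field F] {α β : Type*} (A : Matrix α β F) : α × β → F :=
  fun p => A p.1 p.2

/-- The rearrangement operator `R_{m×n}`: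
`R M ((i,j),(k,l)) = M ((i,k),(j,l))`. -/
def R {F : Type*} [Field F] {m n : ℕ}
    (M : Matrix (Fin m × Fin m) (Fin n × Fin n) F) :
    Matrix (Fin m × Fin n) (Fin m × Fin n) F :=
  fun p q => M (p.1, q.1) (p.2, q.2)

/-- The `j`-th rearrangement operator `R^{(j)}_{m×n}` on `m^k × n^k` matrices
(here with `k` replaced by `k+1` so that `k ≥ 1` automatically): the entry at
row `(a,b)` and column `(r,c)` is the entry of `M` at the tuples obtained from
`r` and `c` by inserting `a` resp. `b` at position `j`. -/
def Rj {F : Type*} [Field F] {m n k : ℕ} (j : Fin (k + 1))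
    (M : Matrix (Fin (k + 1) → Fin m) (Fin (k + 1) → Fin n) F) :
    Matrix (Fin m × Fin n) ((Fin k → Fin m) × (Fin k → Fin n)) F :=
  fun p q => M (j.insertNth p.1 q.1) (j.insertNth p.2 q.2)

/-- `R^Σ_{m×n} = Σ_j R^{(j)}_{m×n}`. -/
def RSigma {F : Type*} [Field F] {m n k : ℕ}
    (M : Matrix (Fin (k + 1) → Fin m) (Fin (k + 1) → Fin n) F) :
    Matrix (Fin m × Fin n) ((Fin k → Fin m) × (Fin k → Fin n)) F :=
  ∑ j : Fin (k + 1), Rj j M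

/-- The `k`-th Kronecker power of an `m×n` matrix, indexed by tuples. -/
def kpow {F : Type*} [Field F] {m n : ℕ} (A : Matrix (Fin m) (Fin n) F) (k : ℕ) :
    Matrix (Fin k → Fin m) (Fin k → Fin n) F :=
  fun r c => ∏ i, A (r i) (c i)

/-- The `k`-fold Kronecker product of a family of `m×n` matrices,
indexed by tuples. -/
def kprodFam {F : Type*} [Field F] {m n k : ℕ}
    (A : Fin k → Matrix (Fin m) (Fin n) F) :
    Matrix (Fin k → Fin m) (Fin k → Fin n) F :=
  fun r c => ∏ i, A i (r i) (c i)

lemma Rj_smul {F : Type*} [Field F] {m n k : ℕ} (j : Fin (k + 1)) (β : F)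
    (M : Matrix (Fin (k + 1) → Fin m) (Fin (k + 1) → Fin n) F) :
    Rj j (β • M) = β • Rj j M := rfl

lemma Rj_kpow {F : Type*} [Field F] {m n k : ℕ} (j : Fin (k + 1))
    (A : Matrix (Fin m) (Fin n) F) :
    Rj j (kpow A (k + 1)) = Rj 0 (kpow A (k + 1)) := by
  ext p q
  simp only [Rj, kpow]
  rw [Fin.prod_univ_succAbove _ j, Fin.prod_univ_succAbove _ 0]
  simp [Fin.insertNth_apply_same, Fin.insertNth_apply_succAbove]

lemma Rj_zero_inj {F : Type*} [Field F] {m n k : ℕ}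
    (M₁ M₂ : Matrix (Fin (k + 1) → Fin m) (Fin (k + 1) → Fin n) F)
    (h : Rj (0 : Fin (k + 1)) M₁ = Rj (0 : Fin (k + 1)) M₂) : M₁ = M₂ := by
  ext r c
  have := congrFun (congrFun h (r 0, c 0)) (Fin.tail r, Fin.tail c)
  simpa [Rj, Fin.insertNth_zero, Fin.cons_self_tail] using this

lemma RSigma_smul_kpow {F : Type*} [Field F] {m n k : ℕ}
    (β : F) (A : Matrix (Fin m) (Fin n) F) :
    RSigma (β • kpow A (k + 1)) =
      (((k + 1 : ℕ) : F) * β) • Rj (0 : Fin (k + 1)) (kpow A (k + 1)) := by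
  unfold RSigma
  have : ∀ j : Fin (k + 1), Rj j (β • kpow A (k + 1)) =
      β • Rj (0 : Fin (k + 1)) (kpow A (k + 1)) := fun j => by
    rw [Rj_smul, Rj_kpow]
  rw [Finset.sum_congr rfl fun j _ => this j]
  simp only [Finset.sum_const, Finset.card_univ, Fintype.card_fin, mul_smul,
      ← Nat.cast_smul_eq_nsmul F]

/-- `R^Σ((α/k) • ⊗^k A) = R^{(1)}(α • ⊗^k A)`, and
consequently `R^Σ` restricted to `X = {α • ⊗^k A}` is a bijection from `X`
onto `R^{(1)}(X)` (here the order `k ≥ 1` of the paper is represented as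
`k + 1`, and `j = 1` of the paper is `(0 : Fin (k+1))`). -/
theorem stmt_11 {F : Type*} [Field F] {m n k : ℕ}
    (hchar : ((k + 1 : ℕ) : F) ≠ 0)
    (A : Matrix (Fin m) (Fin n) F) (α : F) :
    RSigma ((α / ((k + 1 : ℕ) : F)) • kpow A (k + 1)) =
        Rj (0 : Fin (k + 1)) (α • kpow A (k + 1)) ∧
      Set.BijOn RSigma
        {M : Matrix (Fin (k + 1) → Fin m) (Fin (k + 1) → Fin n) F |
          ∃ (β : F) (B : Matrix (Fin m) (Fin n) F), M = β • kpow B (k + 1)}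
        (Rj (0 : Fin (k + 1)) ''
          {M : Matrix (Fin (k + 1) → Fin m) (Fin (k + 1) → Fin n) F |
            ∃ (β : F) (B : Matrix (Fin m) (Fin n) F), M = β • kpow B (k + 1)}) := by
  constructor
  · rw [RSigma_smul_kpow, Rj_smul]
    rw [mul_div_cancel₀ _ hchar]
  · refine ⟨?_, ?_, ?_⟩
    · rintro M ⟨β, B, rfl⟩
      refine ⟨(((k + 1 : ℕ) : F) * β) • kpow B (k + 1), ⟨_, B, rfl⟩, ?_⟩
      rw [RSigma_smul_kpow, Rj_smul]
    · rintro M₁ ⟨β₁, B₁, rfl⟩ M₂ ⟨β₂, B₂, rfl⟩ h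
      rw [RSigma_smul_kpow, RSigma_smul_kpow] at h
      have h2 : Rj (0 : Fin (k + 1)) (β₁ • kpow B₁ (k + 1)) =
          Rj (0 : Fin (k + 1)) (β₂ • kpow B₂ (k + 1)) := by
        rw [Rj_smul, Rj_smul]
        have := congrArg (fun M => (((k + 1 : ℕ) : F))⁻¹ • M) h
        have hchar' : ((k : F) + 1) ≠ 0 := by exact_mod_cast hchar
        simpa [smul_smul, ← mul_assoc, inv_mul_cancel₀ hchar'] using this
      exact Rj_zero_inj _ _ h2
    · rintro N ⟨M, ⟨β, B, rfl⟩, rfl⟩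
      refine ⟨(β / ((k + 1 : ℕ) : F)) • kpow B (k + 1), ⟨_, B, rfl⟩, ?_⟩
      rw [RSigma_smul_kpow, Rj_smul, mul_div_cancel₀ _ hchar]
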